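/- Let T̄, C̄ ⊆ S̄. Let V : S → ℝ be a bounded measurable function with 0 ≤ V ≤ 1 satisfying the Bellman equations for discounted constrained reachability: V(s) = 1 if φ(s) ∈ T̄; V(s) = 0 if φ(s) ∉ T̄ and φ(s) ∉ C̄; and V(s) = γ ∫ V(s') P(ds'|s) if φ(s) ∈ C̄ and φ(s) ∉ T̄. Let V̄ : S̄ → ℝ with 0 ≤ V̄ ≤ 1 satisfy the analogous equations: V̄(x̄) = 1 for x̄ ∈ T̄; V̄(x̄) = 0 for x̄ ∉ T̄ ∪ C̄; and V̄(x̄) = γ Σ_{ȳ∈S̄} P̄(x̄)(ȳ) V̄(ȳ) for x̄ ∈ C̄ \ T̄. Then ∫ |V(s) − V̄(φ(s))| dξ(s) ≤ γ L_P/(1−γ). -/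

import Mathlib

/-!
At a state with `φ s ∈ C̄ \ T̄` both Bellman equations apply; passing from `∫ V dP(s)` to
`∑ P̄(φ s)(y) V̄ y` through `∫ V̄ ∘ φ dP(s)` gives
`|V s - V̄ (φ s)| ≤ γ (∫ |V - V̄ ∘ φ| dP(s) + TV(φ∗P(s), P̄(φ s)))`, where total variation bounds
the change of measure because `0 ≤ V̄ ≤ 1`. At every other state `V s = V̄ (φ s)`. Integrating
against the invariant measure `ξ` turns `∫ |V - V̄ ∘ φ| dP(s)` back into `D = ∫ |V - V̄ ∘ φ| dξ`,
so `D ≤ γ (D + L_P)`.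
-/
open MeasureTheory ProbabilityTheory

noncomputable def tvDist {X : Type*} [MeasurableSpace X] (μ ν : Measure X) : ℝ :=
  ⨆ A : {A : Set X // MeasurableSet A}, |(μ A.1).toReal - (ν A.1).toReal|

section TotalVariation

variable {X : Type*} [MeasurableSpace X]

lemma tvDist_nonneg (μ ν : Measure X) : 0 ≤ tvDist μ ν :=
  Real.iSup_nonneg fun _ ↦ abs_nonneg _

lemma tvDist_comm (μ ν : Measure X) : tvDist μ ν = tvDist ν μ := by
  simp only [tvDist, abs_sub_comm]

lemma abs_measureReal_sub_le_one (μ ν : Measure X) [IsProbabilityMeasure μ]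
    [IsProbabilityMeasure ν] (A : Set X) : |μ.real A - ν.real A| ≤ 1 :=
  abs_sub_le_of_nonneg_of_le measureReal_nonneg measureReal_le_one
    measureReal_nonneg measureReal_le_one

lemma abs_measureReal_sub_le_tvDist (μ ν : Measure X) [IsProbabilityMeasure μ]
    [IsProbabilityMeasure ν] {A : Set X} (hA : MeasurableSet A) :
    |μ.real A - ν.real A| ≤ tvDist μ ν :=
  le_ciSup (f := fun A : {A : Set X // MeasurableSet A} ↦ |μ.real A.1 - ν.real A.1|)
    ⟨1, by rintro _ ⟨B, rfl⟩; exact abs_measureReal_sub_le_one μ ν B⟩ ⟨A, hA⟩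

lemma tvDist_le_one (μ ν : Measure X) [IsProbabilityMeasure μ] [IsProbabilityMeasure ν] :
    tvDist μ ν ≤ 1 :=
  haveI : Nonempty {A : Set X // MeasurableSet A} := ⟨⟨∅, .empty⟩⟩
  ciSup_le fun A ↦ abs_measureReal_sub_le_one μ ν A.1

lemma measurable_tvDist [Finite X] {S : Type*} [MeasurableSpace S] {μ ν : S → Measure X}
    (hμ : Measurable μ) (hν : Measurable ν) : Measurable fun s ↦ tvDist (μ s) (ν s) :=
  .iSup fun A ↦ (((Measure.measurable_coe A.2).comp hμ).ennreal_toReal.sub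
    ((Measure.measurable_coe A.2).comp hν).ennreal_toReal).abs

variable [Fintype X] [DiscreteMeasurableSpace X]

lemma integral_sub_integral_le_tvDist (μ ν : Measure X) [IsProbabilityMeasure μ]
    [IsProbabilityMeasure ν] {g : X → ℝ} (hg0 : ∀ x, 0 ≤ g x) (hg1 : ∀ x, g x ≤ 1) :
    ∫ x, g x ∂μ - ∫ x, g x ∂ν ≤ tvDist μ ν := by
  classical
  set A := Finset.univ.filter fun x ↦ ν.real {x} ≤ μ.real {x}
  calc ∫ x, g x ∂μ - ∫ x, g x ∂ν = ∑ x, (μ.real {x} - ν.real {x}) * g x := by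
        simp only [integral_fintype Integrable.of_finite, smul_eq_mul, sub_mul,
          Finset.sum_sub_distrib]
    _ ≤ ∑ x ∈ A, (μ.real {x} - ν.real {x}) := by
        rw [Finset.sum_filter]
        refine Finset.sum_le_sum fun x _ ↦ ?_
        split_ifs with h <;> nlinarith [hg0 x, hg1 x]
    _ = μ.real A - ν.real A := by
        rw [Finset.sum_sub_distrib, sum_measureReal_singleton, sum_measureReal_singleton]
    _ ≤ tvDist μ ν := (le_abs_self _).trans (abs_measureReal_sub_le_tvDist μ ν .of_discrete)

lemma abs_integral_sub_integral_le_tvDist (μ ν : Measure X) [IsProbabilityMeasure μ]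
    [IsProbabilityMeasure ν] {g : X → ℝ} (hg0 : ∀ x, 0 ≤ g x) (hg1 : ∀ x, g x ≤ 1) :
    |∫ x, g x ∂μ - ∫ x, g x ∂ν| ≤ tvDist μ ν :=
  abs_sub_le_iff.2 ⟨integral_sub_integral_le_tvDist μ ν hg0 hg1,
    tvDist_comm μ ν ▸ integral_sub_integral_le_tvDist ν μ hg0 hg1⟩

end TotalVariation

lemma MeasureTheory.Integrable.of_abs_le_one {α : Type*} [MeasurableSpace α] {μ : Measure α}
    [IsFiniteMeasure μ] {f : α → ℝ} (hf : Measurable f) (h : ∀ x, |f x| ≤ 1) :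
    Integrable f μ :=
  .of_bound hf.aestronglyMeasurable 1 (ae_of_all _ h)

lemma ProbabilityTheory.Kernel.Invariant.integral_integral {α E : Type*} [MeasurableSpace α]
    [NormedAddCommGroup E] [NormedSpace ℝ E] {κ : Kernel α α} {μ : Measure α}
    (hκ : κ.Invariant μ) {f : α → E} (hf : Integrable f μ) :
    ∫ x, ∫ y, f y ∂κ x ∂μ = ∫ x, f x ∂μ := by
  have hcomp : (κ ∘ₖ Kernel.const Unit μ) () = μ := by
    rw [Kernel.comp_apply, Kernel.const_apply]
    exact hκ
  have := Kernel.integral_comp (a := ()) (hcomp ▸ hf)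
  rw [hcomp, Kernel.const_apply] at this
  exact this.symm

lemma abs_integral_sub_integral_le_integral_add_tvDist {S X : Type*} [MeasurableSpace S]
    [Fintype X] [MeasurableSpace X] [DiscreteMeasurableSpace X] {μ : Measure S}
    [IsProbabilityMeasure μ] (ν : Measure X) [IsProbabilityMeasure ν] {φ : S → X}
    (hφ : Measurable φ) {V : S → ℝ} (hV : Integrable V μ) {W : X → ℝ} (hW0 : ∀ x, 0 ≤ W x)
    (hW1 : ∀ x, W x ≤ 1) :
    |∫ s, V s ∂μ - ∫ x, W x ∂ν| ≤ ∫ s, |V s - W (φ s)| ∂μ + tvDist (μ.map φ) ν := by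
  have hWφ : Integrable (fun s ↦ W (φ s)) μ :=
    .of_abs_le_one (Measurable.of_discrete.comp hφ) fun s ↦
      abs_le.2 ⟨by linarith [hW0 (φ s)], hW1 (φ s)⟩
  have := Measure.isProbabilityMeasure_map (μ := μ) hφ.aemeasurable
  calc |∫ s, V s ∂μ - ∫ x, W x ∂ν|
      ≤ |∫ s, V s ∂μ - ∫ s, W (φ s) ∂μ| + |∫ s, W (φ s) ∂μ - ∫ x, W x ∂ν| := abs_sub_le _ _ _
    _ ≤ ∫ s, |V s - W (φ s)| ∂μ + tvDist (μ.map φ) ν := by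
        gcongr
        · rw [← integral_sub hV hWφ]
          exact abs_integral_le_integral_abs
        · rw [← integral_map hφ.aemeasurable Measurable.of_discrete.aestronglyMeasurable]
          exact abs_integral_sub_integral_le_tvDist _ _ hW0 hW1

lemma abs_sub_le_of_bellman {S Sb : Type*} [MeasurableSpace S] [Fintype Sb] [MeasurableSpace Sb]
    [DiscreteMeasurableSpace Sb] (P : Kernel S S) [IsMarkovKernel P] (Pb : Sb → PMF Sb)
    {φ : S → Sb} (hφ : Measurable φ) {γ : ℝ} (hγ0 : 0 ≤ γ) {Tb Cb : Set Sb} {V : S → ℝ}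
    (hV : ∀ s, Integrable V (P s))
    (hVtarget : ∀ s, φ s ∈ Tb → V s = 1)
    (hVavoid : ∀ s, φ s ∉ Tb → φ s ∉ Cb → V s = 0)
    (hVbellman : ∀ s, φ s ∈ Cb → φ s ∉ Tb → V s = γ * ∫ s', V s' ∂(P s))
    {Vb : Sb → ℝ} (hVb0 : ∀ x, 0 ≤ Vb x) (hVb1 : ∀ x, Vb x ≤ 1)
    (hVbtarget : ∀ x ∈ Tb, Vb x = 1)
    (hVbavoid : ∀ x, x ∉ Tb ∪ Cb → Vb x = 0)
    (hVbbellman : ∀ x ∈ Cb \ Tb, Vb x = γ * ∑ y, ((Pb x) y).toReal * Vb y) (s : S) :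
    |V s - Vb (φ s)| ≤
      γ * (∫ x, |V x - Vb (φ x)| ∂P s + tvDist ((P s).map φ) (Pb (φ s)).toMeasure) := by
  have hrhs : 0 ≤ γ * (∫ x, |V x - Vb (φ x)| ∂P s + tvDist ((P s).map φ) (Pb (φ s)).toMeasure) :=
    mul_nonneg hγ0 (add_nonneg (integral_nonneg fun _ ↦ abs_nonneg _) (tvDist_nonneg _ _))
  by_cases hT : φ s ∈ Tb
  · rwa [hVtarget s hT, hVbtarget _ hT, sub_self, abs_zero]
  by_cases hC : φ s ∈ Cb
  · have hsum : ∑ y, ((Pb (φ s)) y).toReal * Vb y = ∫ y, Vb y ∂(Pb (φ s)).toMeasure := by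
      simp only [PMF.integral_eq_sum, smul_eq_mul]
    rw [hVbellman s hC hT, hVbbellman _ ⟨hC, hT⟩, hsum, ← mul_sub, abs_mul, abs_of_nonneg hγ0]
    exact mul_le_mul_of_nonneg_left
      (abs_integral_sub_integral_le_integral_add_tvDist _ hφ (hV s) hVb0 hVb1) hγ0
  · rwa [hVavoid s hT hC, hVbavoid _ (by simp [hT, hC]), sub_self, abs_zero]

theorem value_difference_constrained_reachability_general
    {S : Type*} [MeasurableSpace S]
    {Sb : Type*} [Fintype Sb] [MeasurableSpace Sb] [DiscreteMeasurableSpace Sb]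
    (P : Kernel S S) [IsMarkovKernel P]
    (Pb : Sb → PMF Sb)
    (φ : S → Sb) (hφ : Measurable φ)
    (ξ : Measure S) [IsProbabilityMeasure ξ]
    (hinv : ∀ A : Set S, MeasurableSet A → ξ A = ∫⁻ s, P s A ∂ξ)
    (γ : ℝ) (hγ0 : 0 ≤ γ) (hγ1 : γ < 1)
    (Tb Cb : Set Sb)
    (V : S → ℝ) (hVmeas : Measurable V)
    (hV0 : ∀ s, 0 ≤ V s) (hV1 : ∀ s, V s ≤ 1)
    (hVtarget : ∀ s, φ s ∈ Tb → V s = 1)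
    (hVavoid : ∀ s, φ s ∉ Tb → φ s ∉ Cb → V s = 0)
    (hVbellman : ∀ s, φ s ∈ Cb → φ s ∉ Tb → V s = γ * ∫ s', V s' ∂(P s))
    (Vb : Sb → ℝ) (hVb0 : ∀ x, 0 ≤ Vb x) (hVb1 : ∀ x, Vb x ≤ 1)
    (hVbtarget : ∀ x ∈ Tb, Vb x = 1)
    (hVbavoid : ∀ x, x ∉ Tb ∪ Cb → Vb x = 0)
    (hVbbellman : ∀ x ∈ Cb \ Tb, Vb x = γ * ∑ y, ((Pb x) y).toReal * Vb y) :
    ∫ s, |V s - Vb (φ s)| ∂ξ ≤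
      γ * (∫ s, tvDist ((P s).map φ) ((Pb (φ s)).toMeasure) ∂ξ) / (1 - γ) := by
  set f : S → ℝ := fun s ↦ |V s - Vb (φ s)|
  set L : S → ℝ := fun s ↦ tvDist ((P s).map φ) (Pb (φ s)).toMeasure
  have hP : P.Invariant ξ := by
    ext A hA
    rw [Measure.bind_apply hA P.aemeasurable, hinv A hA]
  have hfmeas : Measurable f := (hVmeas.sub (Measurable.of_discrete.comp hφ)).abs
  have hf1 : ∀ s, |f s| ≤ 1 := fun s ↦ by
    rw [abs_abs]
    exact abs_sub_le_of_nonneg_of_le (hV0 s) (hV1 s) (hVb0 _) (hVb1 _)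
  have hf : Integrable f ξ := .of_abs_le_one hfmeas hf1
  have hPf : Integrable (fun s ↦ ∫ x, f x ∂P s) ξ := .of_bound
    hfmeas.stronglyMeasurable.integral_kernel.aestronglyMeasurable 1 (ae_of_all _ fun s ↦ by
      simpa using norm_integral_le_of_norm_le_const (f := f) (μ := P s) (ae_of_all _ fun x ↦ (hf1 x)))
  have hL : Integrable L ξ := .of_abs_le_one
    (measurable_tvDist ((Measure.measurable_map φ hφ).comp P.measurable)
      ((Measurable.of_discrete (f := fun x : Sb ↦ (Pb x).toMeasure)).comp hφ))
    fun s ↦ by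
      have := Measure.isProbabilityMeasure_map (μ := P s) hφ.aemeasurable
      rw [abs_of_nonneg (tvDist_nonneg _ _)]
      exact tvDist_le_one _ _
  have hpoint := abs_sub_le_of_bellman P Pb hφ hγ0
    (fun s ↦ .of_abs_le_one hVmeas fun x ↦ abs_le.2 ⟨by linarith [hV0 x], hV1 x⟩)
    hVtarget hVavoid hVbellman hVb0 hVb1 hVbtarget hVbavoid hVbbellman
  have key : ∫ s, f s ∂ξ ≤ γ * (∫ s, f s ∂ξ + ∫ s, L s ∂ξ) :=
    calc ∫ s, f s ∂ξ ≤ ∫ s, γ * (∫ x, f x ∂P s + L s) ∂ξ :=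
          integral_mono hf ((hPf.add hL).const_mul γ) hpoint
      _ = γ * (∫ s, f s ∂ξ + ∫ s, L s ∂ξ) := by
          rw [integral_const_mul, integral_add hPf hL, hP.integral_integral hf]
  rw [le_div_iff₀ (sub_pos.2 hγ1)]
  linarith

/-- Value-difference bound for discounted constrained reachability (`C U T`): the expected
(under the stationary distribution `ξ`) absolute difference between the ground value function
`V` and the latent value function `Vb` composed with the embedding `φ` is at most
`γ·L_P/(1-γ)`, where `L_P` is the local transition loss. -/
theorem value_difference_constrained_reachability
    {S : Type*} [MeasurableSpace S]
    {Sb : Type*} [Fintype Sb] [Nonempty Sb] [MeasurableSpace Sb] [DiscreteMeasurableSpace Sb]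
    (P : Kernel S S) [IsMarkovKernel P]
    (Pb : Sb → PMF Sb)
    (φ : S → Sb) (hφ : Measurable φ)
    (ξ : Measure S) [IsProbabilityMeasure ξ]
    (hinv : ∀ A : Set S, MeasurableSet A → ξ A = ∫⁻ s, P s A ∂ξ)
    (γ : ℝ) (hγ0 : 0 ≤ γ) (hγ1 : γ < 1)
    (Tb Cb : Set Sb)
    (V : S → ℝ) (hVmeas : Measurable V)
    (hV0 : ∀ s, 0 ≤ V s) (hV1 : ∀ s, V s ≤ 1)
    (hVtarget : ∀ s, φ s ∈ Tb → V s = 1)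
    (hVavoid : ∀ s, φ s ∉ Tb → φ s ∉ Cb → V s = 0)
    (hVbellman : ∀ s, φ s ∈ Cb → φ s ∉ Tb → V s = γ * ∫ s', V s' ∂(P s))
    (Vb : Sb → ℝ) (hVb0 : ∀ x, 0 ≤ Vb x) (hVb1 : ∀ x, Vb x ≤ 1)
    (hVbtarget : ∀ x ∈ Tb, Vb x = 1)
    (hVbavoid : ∀ x, x ∉ Tb ∪ Cb → Vb x = 0)
    (hVbbellman : ∀ x ∈ Cb \ Tb, Vb x = γ * ∑ y, ((Pb x) y).toReal * Vb y) :
    ∫ s, |V s - Vb (φ s)| ∂ξ ≤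
      γ * (∫ s, tvDist ((P s).map φ) ((Pb (φ s)).toMeasure) ∂ξ) / (1 - γ) :=
  value_difference_constrained_reachability_general P Pb φ hφ ξ hinv γ hγ0 hγ1 Tb Cb V hVmeas hV0
    hV1 hVtarget hVavoid hVbellman Vb hVb0 hVb1 hVbtarget hVbavoid hVbbellman
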